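/- Let ρ, σ be density matrices on a 2^n-dimensional Hilbert space with d = ‖ρ − σ‖₁ ≤ 1/e. Then |S(ρ) − S(σ)| ≤ d·n − d·log₂ d, where S is the von Neumann entropy in bits. -/

import Mathlib

open scoped ComplexOrder

/-- The trace norm `‖A‖₁ = Tr √(AᴴA)` of a complex matrix. -/
noncomputable def traceNorm {n : Type*} [Fintype n] [DecidableEq n] (A : Matrix n n ℂ) : ℝ :=
  (((Matrix.posSemidef_conjTranspose_mul_self A).1.eigenvectorUnitary.1 *
      Matrix.diagonal (((↑) : ℝ → ℂ) ∘ (√·) ∘ (Matrix.posSemidef_conjTranspose_mul_self A).1.eigenvalues) *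
      (star (Matrix.posSemidef_conjTranspose_mul_self A).1.eigenvectorUnitary : Matrix n n ℂ)).trace).re

/-- The von Neumann entropy (in bits) of a Hermitian matrix, computed from its
eigenvalues: `S(ρ) = -∑ λᵢ log₂ λᵢ`. -/
noncomputable def vonNeumannEntropy {n : Type*} [Fintype n] [DecidableEq n]
    {ρ : Matrix n n ℂ} (h : ρ.IsHermitian) : ℝ :=
  -∑ i, h.eigenvalues i * Real.logb 2 (h.eigenvalues i)

/-!
Order the eigenvalues of `ρ` and `σ` decreasingly. Writing `ρ - σ = P - Q` with `P, Q ⪰ 0` and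
`Tr (P + Q) = ‖ρ - σ‖₁`, the matrix `C = σ + P = ρ + Q` dominates both `ρ` and `σ`, so by Weyl's
monotonicity principle (a dimension count in the Courant–Fischer style) each eigenvalue of `C`
dominates the corresponding ones of `ρ` and `σ`; summing gives Mirsky's bound
`∑ₖ |λₖ(ρ) - λₖ(σ)| ≤ Tr (2C - ρ - σ) = ‖ρ - σ‖₁ = d`.
The entropies are Shannon entropies of these spectra. With `η t = -t log t`, the scalar estimate
`|η x - η y| ≤ η |x - y|` for `x, y ∈ [0, 1]`, `|x - y| ≤ 1/e`, Jensen's inequality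
`∑ η εᵢ ≤ η (∑ εᵢ) + (∑ εᵢ) log N` and the monotonicity of `η` on `[0, 1/e]` give
`|S(ρ) - S(σ)| log 2 ≤ η d + d log 2ⁿ`.
-/

open scoped InnerProductSpace
open Module Submodule Matrix

theorem Submodule.inf_ne_bot_of_finrank_lt_add {K E : Type*} [DivisionRing K] [AddCommGroup E]
    [Module K E] [FiniteDimensional K E] {V W : Submodule K E}
    (h : finrank K E < finrank K V + finrank K W) : V ⊓ W ≠ ⊥ := by
  intro hVW
  have hsum := finrank_sup_add_finrank_inf_eq V W
  rw [hVW, finrank_bot, add_zero] at hsum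
  have := Submodule.finrank_le (V ⊔ W)
  omega

namespace OrthonormalBasis

variable {𝕜 E ι : Type*} [RCLike 𝕜] [NormedAddCommGroup E] [InnerProductSpace 𝕜 E] [Fintype ι]
  (b : OrthonormalBasis ι 𝕜 E)

theorem repr_apply_eq_zero_of_mem_span {s : Set ι} {x : E} (hx : x ∈ span 𝕜 (b '' s)) {i : ι}
    (hi : i ∉ s) : b.repr x i = 0 := by
  rw [← b.coe_toBasis, b.toBasis.mem_span_image] at hx
  rw [← b.coe_toBasis_repr_apply]
  exact Finsupp.notMem_support_iff.mp fun h => hi (hx h)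

theorem finrank_span_image (s : Finset ι) : finrank 𝕜 (span 𝕜 (b '' s)) = s.card := by
  rw [Set.image_eq_range, ← Fintype.card_coe]
  exact finrank_span_eq_card (b.orthonormal.linearIndependent.comp _ Subtype.val_injective)

end OrthonormalBasis

namespace LinearMap.IsSymmetric

variable {𝕜 E : Type*} [RCLike 𝕜] [NormedAddCommGroup E] [InnerProductSpace 𝕜 E]
  [FiniteDimensional 𝕜 E] {n : ℕ} (hn : finrank 𝕜 E = n) {T S : E →ₗ[𝕜] E}

theorem re_inner_apply_self_eq_sum (hT : T.IsSymmetric) (x : E) :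
    RCLike.re ⟪x, T x⟫_𝕜 =
      ∑ i, hT.eigenvalues hn i * ‖(hT.eigenvectorBasis hn).repr x i‖ ^ 2 := by
  rw [← (hT.eigenvectorBasis hn).repr.inner_map_map, PiLp.inner_apply, map_sum]
  refine Finset.sum_congr rfl fun i _ => ?_
  rw [eigenvectorBasis_apply_self_apply, ← smul_eq_mul, inner_smul_right,
    inner_self_eq_norm_sq_to_K]
  norm_cast

theorem mul_norm_sq_le_re_inner_apply_self (hT : T.IsSymmetric) {s : Set (Fin n)} {c : ℝ}
    (hc : ∀ i ∈ s, c ≤ hT.eigenvalues hn i) {x : E}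
    (hx : x ∈ span 𝕜 (hT.eigenvectorBasis hn '' s)) :
    c * ‖x‖ ^ 2 ≤ RCLike.re ⟪x, T x⟫_𝕜 := by
  rw [re_inner_apply_self_eq_sum hn, ← (hT.eigenvectorBasis hn).repr.norm_map,
    EuclideanSpace.norm_sq_eq, Finset.mul_sum]
  refine Finset.sum_le_sum fun i _ => ?_
  by_cases hi : i ∈ s
  · exact mul_le_mul_of_nonneg_right (hc i hi) (sq_nonneg _)
  · simp [OrthonormalBasis.repr_apply_eq_zero_of_mem_span _ hx hi]

theorem re_inner_apply_self_le_mul_norm_sq (hT : T.IsSymmetric) {s : Set (Fin n)} {c : ℝ}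
    (hc : ∀ i ∈ s, hT.eigenvalues hn i ≤ c) {x : E}
    (hx : x ∈ span 𝕜 (hT.eigenvectorBasis hn '' s)) :
    RCLike.re ⟪x, T x⟫_𝕜 ≤ c * ‖x‖ ^ 2 := by
  rw [re_inner_apply_self_eq_sum hn, ← (hT.eigenvectorBasis hn).repr.norm_map,
    EuclideanSpace.norm_sq_eq, Finset.mul_sum]
  refine Finset.sum_le_sum fun i _ => ?_
  by_cases hi : i ∈ s
  · exact mul_le_mul_of_nonneg_right (hc i hi) (sq_nonneg _)
  · simp [OrthonormalBasis.repr_apply_eq_zero_of_mem_span _ hx hi]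

theorem eigenvalues_le_eigenvalues (hT : T.IsSymmetric) (hS : S.IsSymmetric)
    (hST : (S - T).IsPositive) (k : Fin n) :
    hT.eigenvalues hn k ≤ hS.eigenvalues hn k := by
  set V := span 𝕜 (hT.eigenvectorBasis hn '' ↑(Finset.Iic k))
  set W := span 𝕜 (hS.eigenvectorBasis hn '' ↑(Finset.Ici k))
  have hdim : finrank 𝕜 E < finrank 𝕜 V + finrank 𝕜 W := by
    rw [OrthonormalBasis.finrank_span_image, OrthonormalBasis.finrank_span_image, Fin.card_Iic,
      Fin.card_Ici, hn]
    omega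
  obtain ⟨x, ⟨hxV, hxW⟩, hx⟩ :=
    exists_mem_ne_zero_of_ne_bot (inf_ne_bot_of_finrank_lt_add hdim)
  have hT_ge := hT.mul_norm_sq_le_re_inner_apply_self hn
    (fun i hi => hT.eigenvalues_antitone hn (Finset.mem_Iic.mp hi)) hxV
  have hS_le := hS.re_inner_apply_self_le_mul_norm_sq hn
    (fun i hi => hS.eigenvalues_antitone hn (Finset.mem_Ici.mp hi)) hxW
  have hTS : RCLike.re ⟪x, T x⟫_𝕜 ≤ RCLike.re ⟪x, S x⟫_𝕜 := by
    simpa [inner_sub_right] using hST.re_inner_nonneg_right x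
  have hx2 : 0 < ‖x‖ ^ 2 := by positivity
  exact le_of_mul_le_mul_right ((hT_ge.trans hTS).trans hS_le) hx2

end LinearMap.IsSymmetric

section Spectrum

variable {𝕜 n : Type*} [RCLike 𝕜] [Fintype n] [DecidableEq n] {A B : Matrix n n 𝕜}

namespace Matrix.IsHermitian

theorem trace_cfc (hA : A.IsHermitian) (f : ℝ → ℝ) :
    (cfc f A).trace = ∑ i, (f (hA.eigenvalues i) : 𝕜) := by
  rw [hA.cfc_eq, IsHermitian.cfc, Unitary.conjStarAlgAut_apply, trace_mul_cycle,
    Unitary.coe_star_mul_self, one_mul, trace_diagonal]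
  rfl

theorem sum_comp_eigenvalues₀ {M : Type*} [AddCommMonoid M] (hA : A.IsHermitian) (f : ℝ → M) :
    ∑ k, f (hA.eigenvalues₀ k) = ∑ i, f (hA.eigenvalues i) :=
  ((Fintype.equivOfCardEq (Fintype.card_fin _)).symm.sum_comp (f ∘ hA.eigenvalues₀)).symm

theorem re_trace_eq_sum_eigenvalues₀ (hA : A.IsHermitian) :
    RCLike.re A.trace = ∑ k, hA.eigenvalues₀ k := by
  simpa [hA.trace_eq_sum_eigenvalues] using (hA.sum_comp_eigenvalues₀ id).symm

theorem eigenvalues₀_le_eigenvalues₀ (hA : A.IsHermitian) (hB : B.IsHermitian)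
    (hAB : (B - A).PosSemidef) (k : Fin (Fintype.card n)) :
    hA.eigenvalues₀ k ≤ hB.eigenvalues₀ k :=
  LinearMap.IsSymmetric.eigenvalues_le_eigenvalues _ _ _
    (by rwa [← map_sub, isPositive_toEuclideanLin_iff]) k

end Matrix.IsHermitian

theorem Matrix.PosSemidef.eigenvalues₀_mem_Icc (hA : A.PosSemidef) (htr : A.trace = 1)
    (k : Fin (Fintype.card n)) : hA.1.eigenvalues₀ k ∈ Set.Icc 0 1 := by
  have hnonneg (j : Fin (Fintype.card n)) : 0 ≤ hA.1.eigenvalues₀ j := by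
    simpa [IsHermitian.eigenvalues] using
      hA.eigenvalues_nonneg (Fintype.equivOfCardEq (Fintype.card_fin _) j)
  refine ⟨hnonneg k, ?_⟩
  calc hA.1.eigenvalues₀ k ≤ ∑ j, hA.1.eigenvalues₀ j :=
        Finset.single_le_sum (fun j _ => hnonneg j) (Finset.mem_univ k)
    _ = 1 := by rw [← hA.1.re_trace_eq_sum_eigenvalues₀, htr, RCLike.one_re]

end Spectrum

section TraceNorm

variable {n : Type*} [Fintype n] [DecidableEq n]

theorem traceNorm_eq_re_trace_cfc_sqrt (A : Matrix n n ℂ) :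
    traceNorm A = (cfc Real.sqrt (Aᴴ * A)).trace.re := by
  rw [(posSemidef_conjTranspose_mul_self A).1.cfc_eq, IsHermitian.cfc,
    Unitary.conjStarAlgAut_apply]
  rfl

namespace Matrix.IsHermitian

theorem traceNorm_eq_sum_abs_eigenvalues {A : Matrix n n ℂ} (hA : A.IsHermitian) :
    traceNorm A = ∑ i, |hA.eigenvalues i| := by
  rw [traceNorm_eq_re_trace_cfc_sqrt, hA.eq, ← sq, ← cfc_comp_pow Real.sqrt 2 A, hA.trace_cfc,
    Complex.re_sum]
  simp [Real.sqrt_sq_eq_abs]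

open scoped MatrixOrder in
theorem exists_posSemidef_sub_eq {D : Matrix n n ℂ} (hD : D.IsHermitian) :
    ∃ P Q : Matrix n n ℂ, P.PosSemidef ∧ Q.PosSemidef ∧ P - Q = D ∧
      (P + Q).trace.re = traceNorm D := by
  refine ⟨cfc (fun x : ℝ => max x 0) D, cfc (fun x : ℝ => max (-x) 0) D,
    nonneg_iff_posSemidef.mp (cfc_nonneg fun _ _ => le_max_right _ _),
    nonneg_iff_posSemidef.mp (cfc_nonneg fun _ _ => le_max_right _ _), ?_, ?_⟩
  · rw [← cfc_sub (fun x : ℝ => max x 0) (fun x : ℝ => max (-x) 0) D]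
    simp only [max_zero_sub_max_neg_zero_eq_self]
    exact cfc_id' ℝ D
  · rw [← cfc_add D (fun x : ℝ => max x 0) (fun x : ℝ => max (-x) 0), hD.trace_cfc,
      hD.traceNorm_eq_sum_abs_eigenvalues, Complex.re_sum]
    simp [max_zero_add_max_neg_zero_eq_abs_self]

theorem sum_abs_eigenvalues₀_sub_le_traceNorm {A B : Matrix n n ℂ} (hA : A.IsHermitian)
    (hB : B.IsHermitian) :
    ∑ k, |hA.eigenvalues₀ k - hB.eigenvalues₀ k| ≤ traceNorm (A - B) := by
  obtain ⟨P, Q, hP, hQ, hPQ, htr⟩ := (hA.sub hB).exists_posSemidef_sub_eq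
  have hC : (B + P).IsHermitian := hB.add hP.1
  have hCA : B + P - A = Q := by rw [sub_eq_iff_eq_add.mp hPQ]; abel
  have hCB : B + P - B = P := add_sub_cancel_left B P
  have hAC := hA.eigenvalues₀_le_eigenvalues₀ hC (by rwa [hCA])
  have hBC := hB.eigenvalues₀_le_eigenvalues₀ hC (by rwa [hCB])
  have sum_sub {X : Matrix n n ℂ} (hX : X.IsHermitian) :
      ∑ k, (hC.eigenvalues₀ k - hX.eigenvalues₀ k) = (B + P - X).trace.re := by
    rw [Finset.sum_sub_distrib, trace_sub, Complex.sub_re, ← RCLike.re_to_complex,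
      ← RCLike.re_to_complex, hC.re_trace_eq_sum_eigenvalues₀, hX.re_trace_eq_sum_eigenvalues₀]
  calc ∑ k, |hA.eigenvalues₀ k - hB.eigenvalues₀ k|
      ≤ ∑ k, ((hC.eigenvalues₀ k - hA.eigenvalues₀ k) +
          (hC.eigenvalues₀ k - hB.eigenvalues₀ k)) :=
        Finset.sum_le_sum fun k _ => abs_sub_le_iff.mpr
          ⟨by linarith [hAC k, hBC k], by linarith [hAC k, hBC k]⟩
    _ = (P + Q).trace.re := by
        rw [Finset.sum_add_distrib, sum_sub hA, sum_sub hB, hCA, hCB, trace_add, Complex.add_re,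
          add_comm]
    _ = traceNorm (A - B) := htr

end Matrix.IsHermitian

end TraceNorm

namespace Real

theorem negMulLog_add_le {x t : ℝ} (hx : 0 ≤ x) (ht : 0 ≤ t) :
    negMulLog (x + t) ≤ negMulLog x + negMulLog t := by
  have mul_log_le {a b : ℝ} (ha : 0 ≤ a) (hb : 0 ≤ b) : a * log a ≤ a * log (a + b) := by
    rcases ha.eq_or_lt with rfl | ha
    · simp
    · exact mul_le_mul_of_nonneg_left (log_le_log ha (by linarith)) ha.le
  have hx_le := mul_log_le hx ht
  have ht_le := mul_log_le ht hx
  rw [add_comm t x] at ht_le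
  simp only [negMulLog_eq_neg]
  nlinarith

theorem negMulLog_sub_negMulLog_add_le {x t : ℝ} (hx : 0 ≤ x) (ht : 0 ≤ t) (hxt : x + t ≤ 1)
    (hte : t ≤ exp (-1)) : negMulLog x - negMulLog (x + t) ≤ negMulLog t := by
  rcases hx.eq_or_lt with rfl | hx
  · simpa using negMulLog_nonneg ht (by linarith)
  rcases ht.eq_or_lt with rfl | ht
  · simp
  have hlog_ratio : x * (log (x + t) - log x) ≤ t := by
    have h := log_le_sub_one_of_pos (div_pos (add_pos hx ht) hx)
    rw [log_div (add_pos hx ht).ne' hx.ne'] at h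
    calc x * (log (x + t) - log x) ≤ x * ((x + t) / x - 1) := mul_le_mul_of_nonneg_left h hx.le
      _ = t := by field_simp; ring
  -- since `t (x + t) ≤ t ≤ 1/e`
  have hlog_prod : log (x + t) + log t ≤ -1 := by
    rw [← log_mul (add_pos hx ht).ne' ht.ne', ← log_exp (-1)]
    exact log_le_log (by positivity) (by nlinarith)
  simp only [negMulLog_eq_neg]
  nlinarith [mul_le_mul_of_nonneg_left hlog_prod ht.le]

theorem abs_negMulLog_sub_le {x y : ℝ} (hx : 0 ≤ x) (hy : 0 ≤ y) (hx1 : x ≤ 1) (hy1 : y ≤ 1)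
    (hxy : |x - y| ≤ exp (-1)) : |negMulLog x - negMulLog y| ≤ negMulLog |x - y| := by
  wlog hle : x ≤ y generalizing x y
  · rw [abs_sub_comm, abs_sub_comm x]
    exact this hy hx hy1 hx1 (by rwa [abs_sub_comm]) (by linarith)
  obtain ⟨t, ht, rfl⟩ : ∃ t, 0 ≤ t ∧ y = x + t := ⟨y - x, by linarith, by ring⟩
  rw [show x - (x + t) = -t by ring, abs_neg, abs_of_nonneg ht] at hxy ⊢
  rw [abs_le]
  constructor
  · linarith [negMulLog_add_le hx ht]
  · linarith [negMulLog_sub_negMulLog_add_le hx ht hy1 hxy]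

theorem monotoneOn_negMulLog : MonotoneOn negMulLog (Set.Icc 0 (exp (-1))) := by
  refine monotoneOn_of_deriv_nonneg (convex_Icc _ _) continuous_negMulLog.continuousOn
    (differentiableOn_negMulLog.mono fun x hx => ?_) fun x hx => ?_ <;>
    rw [interior_Icc] at hx
  · exact hx.1.ne'
  · rw [deriv_negMulLog hx.1.ne']
    have := (log_lt_log hx.1 hx.2).trans_eq (log_exp (-1))
    linarith

theorem sum_negMulLog_le {ι : Type*} [Fintype ι] (ε : ι → ℝ) (hε : ∀ i, 0 ≤ ε i) :
    ∑ i, negMulLog (ε i) ≤ negMulLog (∑ i, ε i) + (∑ i, ε i) * log (Fintype.card ι) := by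
  rcases isEmpty_or_nonempty ι with hι | hι
  · simp
  set M : ℝ := (Fintype.card ι : ℝ)
  have hM : 0 < M := by positivity
  have hJensen := concaveOn_negMulLog.le_map_sum (t := Finset.univ) (w := fun _ => M⁻¹)
    (p := ε) (fun _ _ => by positivity) (by simp [M, Finset.card_univ]) (fun i _ => hε i)
  rw [← Finset.smul_sum, ← Finset.smul_sum, smul_eq_mul, smul_eq_mul, mul_comm M⁻¹,
    negMulLog_mul, negMulLog, log_inv] at hJensen
  have := mul_le_mul_of_nonneg_left hJensen hM.le
  field_simp at this
  linarith

theorem abs_sum_negMulLog_sub_le {ι : Type*} [Fintype ι] {p q : ι → ℝ} {d : ℝ}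
    (hp : ∀ i, p i ∈ Set.Icc 0 1) (hq : ∀ i, q i ∈ Set.Icc 0 1)
    (hpq : ∑ i, |p i - q i| ≤ d) (hd : d ≤ exp (-1)) :
    |∑ i, negMulLog (p i) - ∑ i, negMulLog (q i)| ≤ negMulLog d + d * log (Fintype.card ι) := by
  set s := ∑ i, |p i - q i|
  have hs : 0 ≤ s := Finset.sum_nonneg fun i _ => abs_nonneg _
  have hpq_le (i : ι) : |p i - q i| ≤ exp (-1) :=
    ((Finset.single_le_sum (fun j _ => abs_nonneg (p j - q j)) (Finset.mem_univ i)).trans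
      hpq).trans hd
  calc |∑ i, negMulLog (p i) - ∑ i, negMulLog (q i)|
      ≤ ∑ i, |negMulLog (p i) - negMulLog (q i)| := by
        rw [← Finset.sum_sub_distrib]
        exact Finset.abs_sum_le_sum_abs _ _
    _ ≤ ∑ i, negMulLog |p i - q i| := Finset.sum_le_sum fun i _ =>
        abs_negMulLog_sub_le (hp i).1 (hq i).1 (hp i).2 (hq i).2 (hpq_le i)
    _ ≤ negMulLog s + s * log (Fintype.card ι) := sum_negMulLog_le _ fun i => abs_nonneg _
    _ ≤ negMulLog d + d * log (Fintype.card ι) := by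
        gcongr
        exact monotoneOn_negMulLog ⟨hs, hpq.trans hd⟩ ⟨hs.trans hpq, hd⟩ hpq

end Real

theorem vonNeumannEntropy_eq_sum_negMulLog {n : Type*} [Fintype n] [DecidableEq n]
    {ρ : Matrix n n ℂ} (h : ρ.IsHermitian) :
    vonNeumannEntropy h = (∑ k, Real.negMulLog (h.eigenvalues₀ k)) / Real.log 2 := by
  rw [vonNeumannEntropy, h.sum_comp_eigenvalues₀, Finset.sum_div, ← Finset.sum_neg_distrib]
  refine Finset.sum_congr rfl fun i _ => ?_
  rw [Real.logb, Real.negMulLog]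
  ring

/-- Fannes continuity inequality: for density matrices `ρ, σ` on a `2^n`-dimensional
space with `d = ‖ρ - σ‖₁ ≤ 1/e`, one has `|S(ρ) - S(σ)| ≤ d·n - d·log₂ d`. -/
theorem fannes_inequality (n : ℕ) (ρ σ : Matrix (Fin (2 ^ n)) (Fin (2 ^ n)) ℂ)
    (hρ : ρ.PosSemidef) (hσ : σ.PosSemidef)
    (hρtr : ρ.trace = 1) (hσtr : σ.trace = 1)
    (hd : traceNorm (ρ - σ) ≤ 1 / Real.exp 1) :
    |vonNeumannEntropy hρ.1 - vonNeumannEntropy hσ.1|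
      ≤ traceNorm (ρ - σ) * n - traceNorm (ρ - σ) * Real.logb 2 (traceNorm (ρ - σ)) := by
  set d := traceNorm (ρ - σ)
  have hlog2 : 0 < Real.log 2 := Real.log_pos one_lt_two
  have hfannes := Real.abs_sum_negMulLog_sub_le (hρ.eigenvalues₀_mem_Icc hρtr)
    (hσ.eigenvalues₀_mem_Icc hσtr) (hρ.1.sum_abs_eigenvalues₀_sub_le_traceNorm hσ.1)
    (by rwa [Real.exp_neg, inv_eq_one_div])
  simp only [Fintype.card_fin] at hfannes
  have hrhs : d * n - d * Real.logb 2 d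
      = (Real.negMulLog d + d * Real.log (2 ^ n : ℕ)) / Real.log 2 := by
    rw [Nat.cast_pow, Real.log_pow, Real.logb, Real.negMulLog]
    field_simp
    push_cast
    ring
  rw [hrhs, vonNeumannEntropy_eq_sum_negMulLog, vonNeumannEntropy_eq_sum_negMulLog,
    ← sub_div, abs_div, abs_of_pos hlog2]
  exact div_le_div_of_nonneg_right hfannes hlog2.le
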